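/- Let T ∈ R^{n1×n2×n3} and let (λ, u, v, w) satisfy the singular-pair equations T(·,v,w) = λu, T(u,·,w) = λv, T(u,v,·) = λw with u, v, w unit vectors, and let Φ be the associated block contraction matrix. If λ ≠ 0, then the two vectors (u, 0, −w) and (0, v, −w) in R^{n1+n2+n3} are linearly independent eigenvectors of Φ for the eigenvalue −λ; hence the eigenvalue −λ of Φ has geometric multiplicity at least 2. -/
import Mathlib

open Finset

/-- Block contraction matrix Φ associated to a third-order tensor `T` and vectors `u, v, w`. -/
noncomputable def Phi {n1 n2 n3 : ℕ} (T : Fin n1 → Fin n2 → Fin n3 → ℝ)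
    (u : Fin n1 → ℝ) (v : Fin n2 → ℝ) (w : Fin n3 → ℝ) :
    Matrix (Fin n1 ⊕ Fin n2 ⊕ Fin n3) (Fin n1 ⊕ Fin n2 ⊕ Fin n3) ℝ :=
  fun a b =>
    match a, b with
    | .inl _, .inl _ => 0
    | .inl i, .inr (.inl j) => ∑ k, w k * T i j k
    | .inl i, .inr (.inr k) => ∑ j, v j * T i j k
    | .inr (.inl j), .inl i => ∑ k, w k * T i j k
    | .inr (.inl _), .inr (.inl _) => 0
    | .inr (.inl j), .inr (.inr k) => ∑ i, u i * T i j k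
    | .inr (.inr k), .inl i => ∑ j, v j * T i j k
    | .inr (.inr k), .inr (.inl j) => ∑ i, u i * T i j k
    | .inr (.inr _), .inr (.inr _) => 0


theorem stmt19 {n1 n2 n3 : ℕ} (T : Fin n1 → Fin n2 → Fin n3 → ℝ)
    (lam : ℝ) (u : Fin n1 → ℝ) (v : Fin n2 → ℝ) (w : Fin n3 → ℝ)
    (hu : Real.sqrt (∑ i, u i ^ 2) = 1) (hv : Real.sqrt (∑ j, v j ^ 2) = 1)
    (hw : Real.sqrt (∑ k, w k ^ 2) = 1)
    (h1 : ∀ i, ∑ j, ∑ k, v j * w k * T i j k = lam * u i)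
    (h2 : ∀ j, ∑ i, ∑ k, u i * w k * T i j k = lam * v j)
    (h3 : ∀ k, ∑ i, ∑ j, u i * v j * T i j k = lam * w k)
    (hlam : lam ≠ 0) :
    (Phi T u v w).mulVec (Sum.elim u (Sum.elim (0 : Fin n2 → ℝ) (-w))) =
      (-lam) • (Sum.elim u (Sum.elim (0 : Fin n2 → ℝ) (-w))) ∧
    (Phi T u v w).mulVec (Sum.elim (0 : Fin n1 → ℝ) (Sum.elim v (-w))) =
      (-lam) • (Sum.elim (0 : Fin n1 → ℝ) (Sum.elim v (-w))) ∧
    LinearIndependent ℝ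
      ![Sum.elim u (Sum.elim (0 : Fin n2 → ℝ) (-w)),
        Sum.elim (0 : Fin n1 → ℝ) (Sum.elim v (-w))] := by
  -- rearranged singular-pair equations
  have h1' : ∀ i, ∑ k, (∑ j, v j * T i j k) * w k = lam * u i := by
    intro i
    rw [← h1 i, Finset.sum_comm]
    exact Finset.sum_congr rfl fun j _ => by
      rw [Finset.sum_mul]; exact Finset.sum_congr rfl fun k _ => by ring
  have h2' : ∀ j, ∑ k, (∑ i, u i * T i j k) * w k = lam * v j := by
    intro j
    rw [← h2 j, Finset.sum_comm]
    exact Finset.sum_congr rfl fun i _ => by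
      rw [Finset.sum_mul]; exact Finset.sum_congr rfl fun k _ => by ring
  have h3u : ∀ k, ∑ i, (∑ j, v j * T i j k) * u i = lam * w k := by
    intro k
    rw [← h3 k]
    exact Finset.sum_congr rfl fun i _ => by
      rw [Finset.sum_mul]; exact Finset.sum_congr rfl fun j _ => by ring
  have h3v : ∀ k, ∑ j, (∑ i, u i * T i j k) * v j = lam * w k := by
    intro k
    rw [← h3 k, Finset.sum_comm]
    exact Finset.sum_congr rfl fun j _ => by
      rw [Finset.sum_mul]; exact Finset.sum_congr rfl fun i _ => by ring
  have hcomm : ∀ i, ∑ j, (∑ k, w k * T i j k) * v j = ∑ k, (∑ j, v j * T i j k) * w k := by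
    intro i
    simp only [Finset.sum_mul]
    rw [Finset.sum_comm]
    exact Finset.sum_congr rfl fun k _ => Finset.sum_congr rfl fun j _ => by ring
  have hcomm2 : ∀ j, ∑ i, (∑ k, w k * T i j k) * u i = ∑ k, (∑ i, u i * T i j k) * w k := by
    intro j
    simp only [Finset.sum_mul]
    rw [Finset.sum_comm]
    exact Finset.sum_congr rfl fun k _ => Finset.sum_congr rfl fun i _ => by ring
  refine ⟨?_, ?_, ?_⟩
  · funext a
    rcases a with i | j | k <;>
      simp [Matrix.mulVec, dotProduct, Phi, Fintype.sum_sum_type]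
    · exact h1' i
    · rw [hcomm2 j]; ring
    · exact h3u k
  · funext a
    rcases a with i | j | k <;>
      simp [Matrix.mulVec, dotProduct, Phi, Fintype.sum_sum_type]
    · rw [hcomm i]; ring
    · exact h2' j
    · exact h3v k
  · -- u ≠ 0 and v ≠ 0
    have hune : ∃ i, u i ≠ 0 := by
      by_contra h
      push_neg at h
      simp [h] at hu
    have hvne : ∃ j, v j ≠ 0 := by
      by_contra h
      push_neg at h
      simp [h] at hv
    obtain ⟨i0, hi0⟩ := hune
    obtain ⟨j0, hj0⟩ := hvne
    rw [LinearIndependent.pair_iff]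
    intro s t hst
    have hA := congrFun hst (Sum.inl i0)
    have hB := congrFun hst (Sum.inr (Sum.inl j0))
    simp at hA hB
    exact ⟨by rcases hA with h | h; exact h; exact absurd h hi0,
           by rcases hB with h | h; exact h; exact absurd h hj0⟩
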